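/- arXiv:2411.00655 — 6 statements merged into one kernel-verified Lean document; each statement's English description precedes it below -/
import Mathlib

section
/- Let X be a finite-dimensional real inner product space, let Ω ⊆ X be a convex set, and let x̄ ∈ Ω. If the normal cone N_Ω(x̄) = {v ∈ X | ⟪v, u − x̄⟫ ≤ 0 for all u ∈ Ω} equals the orthogonal complement of par Ω (the direction of the affine span of Ω), then x̄ belongs to the relative interior (intrinsic interior) of Ω. -/
open RealInnerProductSpace Set

/-- If the affine span of a set is everything, the intrinsic interior is the interior. -/
lemma intrinsicInterior_eq_interior_of_affineSpan_eq_top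
    {X : Type*} [NormedAddCommGroup X] [NormedSpace ℝ X] {s : Set X}
    (hs : affineSpan ℝ s = ⊤) : intrinsicInterior ℝ s = interior s := by
  refine subset_antisymm ?_ interior_subset_intrinsicInterior
  have hopen : IsOpen ((affineSpan ℝ s : Set X)) := by
    rw [hs]; simp
  have hmap : IsOpenMap (Subtype.val : affineSpan ℝ s → X) :=
    hopen.isOpenMap_subtype_val
  rintro x ⟨y, hy, rfl⟩
  have := hmap.image_interior_subset (Subtype.val ⁻¹' s) ⟨y, hy, rfl⟩
  exact interior_mono (image_preimage_subset _ _) this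

/-- Lemma 3.1 (converse direction of the equality case): in a finite-dimensional real
inner product space, if the normal cone to a convex set `Ω` at `xbar ∈ Ω` coincides with
the orthogonal complement of `par Ω` (the direction of the affine span of `Ω`), then
`xbar` lies in the relative (intrinsic) interior of `Ω`. -/
theorem mem_intrinsicInterior_of_normalCone_eq_par_perp
    {X : Type*} [NormedAddCommGroup X] [InnerProductSpace ℝ X] [FiniteDimensional ℝ X]
    (Ω : Set X) (hΩ : Convex ℝ Ω) (xbar : X) (hxbar : xbar ∈ Ω)
    (h : {v : X | ∀ u ∈ Ω, ⟪v, u - xbar⟫ ≤ 0}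
        = {v : X | ∀ w ∈ (affineSpan ℝ Ω).direction, ⟪v, w⟫ = 0}) :
    xbar ∈ intrinsicInterior ℝ Ω := by
  set E := (affineSpan ℝ Ω).direction with hE
  -- the affine isometry `e ↦ xbar + e` from `E` into `X`
  set φ : E →ᵃⁱ[ℝ] X :=
    (AffineIsometryEquiv.constVAdd ℝ X xbar).toAffineIsometry.comp
      E.subtypeₗᵢ.toAffineIsometry with hφdef
  have hφ : ∀ e : E, φ e = xbar + (e : X) := by
    intro e
    simp [hφdef, AffineIsometryEquiv.coe_constVAdd, vadd_eq_add]
  have hφinj : Function.Injective φ := φ.injective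
  -- `s` is `Ω` pulled back to `E`
  set s : Set E := φ ⁻¹' Ω with hs
  have hmemE : ∀ u ∈ Ω, u - xbar ∈ E := fun u hu =>
    AffineSubspace.vsub_mem_direction (subset_affineSpan ℝ Ω hu) (subset_affineSpan ℝ Ω hxbar)
  have himg : φ '' s = Ω := by
    refine subset_antisymm (image_preimage_subset _ _) ?_
    intro u hu
    refine ⟨⟨u - xbar, hmemE u hu⟩, ?_, ?_⟩
    · simp only [hs, mem_preimage, hφ]
      simpa using hu
    · simp [hφ]
  have h0s : (0 : E) ∈ s := by simpa [hs, hφ] using hxbar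
  -- the affine span of `s` is all of `E`
  have hspan : affineSpan ℝ s = (⊤ : AffineSubspace ℝ E) := by
    rw [eq_top_iff]
    intro e _
    have he : φ e ∈ affineSpan ℝ Ω := by
      have := AffineSubspace.vadd_mem_of_mem_direction e.2 (subset_affineSpan ℝ Ω hxbar)
      rw [hφ e]
      rwa [vadd_eq_add, add_comm] at this
    have : φ e ∈ (affineSpan ℝ s).map φ.toAffineMap := by
      rw [AffineSubspace.map_span, AffineIsometry.coe_toAffineMap, himg]
      exact he
    obtain ⟨e', he', hee'⟩ := this
    have : e' = e := hφinj hee'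
    rwa [← this]
  have hsconv : Convex ℝ s := hΩ.affine_preimage φ.toAffineMap
  -- nonempty interior in `E`
  have hint : (interior s).Nonempty := by
    rw [hsconv.interior_nonempty_iff_affineSpan_eq_top]
    exact hspan
  -- main claim: `0 ∈ interior s`
  have key : (0 : E) ∈ interior s := by
    by_contra h0
    obtain ⟨f, hf⟩ := geometric_hahn_banach_open_point hsconv.interior isOpen_interior h0
    have hf0 : ∀ a ∈ interior s, f a < 0 := by
      intro a ha
      have := hf a ha
      simpa using this
    -- `f ≤ 0` on all of `s`
    have hfs : ∀ u ∈ s, f u ≤ 0 := by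
      intro u hu
      obtain ⟨a, ha⟩ := hint
      have hu_cl : u ∈ closure (interior s) := by
        have hseg : segment ℝ a u ⊆ closure (openSegment ℝ a u) :=
          segment_subset_closure_openSegment
        have hos : openSegment ℝ a u ⊆ interior s :=
          hsconv.openSegment_interior_closure_subset_interior ha (subset_closure hu)
        exact closure_mono hos (hseg (right_mem_segment ℝ a u))
      have hclosed : IsClosed {x : E | f x ≤ 0} :=
        isClosed_le f.continuous continuous_const
      have : closure (interior s) ⊆ {x : E | f x ≤ 0} :=
        closure_minimal (fun x hx => (hf0 x hx).le) hclosed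
      exact this hu_cl
    -- Riesz representative of `f`
    set v0 : E := (InnerProductSpace.toDual ℝ E).symm f with hv0
    have hv0app : ∀ x : E, ⟪v0, x⟫ = f x := fun x =>
      InnerProductSpace.toDual_symm_apply
    set v : X := (v0 : X) with hv
    have hvmem : v ∈ {v : X | ∀ u ∈ Ω, ⟪v, u - xbar⟫ ≤ 0} := by
      intro u hu
      have he : u - xbar ∈ E := hmemE u hu
      have hes : (⟨u - xbar, he⟩ : E) ∈ s := by
        simp only [hs, mem_preimage, hφ]
        simpa using hu
      have : ⟪v, u - xbar⟫ = ⟪v0, (⟨u - xbar, he⟩ : E)⟫ :=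
        (Submodule.coe_inner E v0 ⟨u - xbar, he⟩).symm
      rw [this, hv0app]
      exact hfs _ hes
    rw [h] at hvmem
    have : ⟪v, v⟫ = 0 := hvmem v v0.2
    have hv0z : v0 = 0 := by
      have : v = 0 := inner_self_eq_zero.mp this
      exact Subtype.ext this
    obtain ⟨a, ha⟩ := hint
    have : f a < 0 := hf0 a ha
    rw [← hv0app a, hv0z] at this
    simp at this
  -- conclude
  have : intrinsicInterior ℝ Ω = φ '' interior s := by
    rw [← himg, φ.image_intrinsicInterior,
      intrinsicInterior_eq_interior_of_affineSpan_eq_top hspan]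
  rw [this]
  exact ⟨0, key, by simp [hφ]⟩
end

section
/- Let g : ℝ → ℝ be defined by g(x) = 0 for x ≤ 0 and g(x) = 2^(2i) + 3·2^i·(x − 2^i) for x > 0, where i ∈ ℤ is the unique integer with 2^i ≤ x < 2^(i+1). Then for all real numbers u and t with u < t and 0 < t, one has g(t) − g(u) ≤ 3·t·(t − u). -/
/-!
On `[a, 2a)` with `a = 2^i` the function `g` is the chord of `x ↦ x²` over `[a, 2a]`, a line of
slope `3a`. Fix `t` in this interval. Every chord over an earlier dyadic interval lies above this
one up to the right end of that interval, and `g = 0` lies above it on `x ≤ 0`, so `g` lies above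
the chord through `(t, g t)` left of `t`. Hence `g t - g u ≤ 3a (t - u) ≤ 3t (t - u)`.
-/

/-- The chord of `x ↦ x ^ 2` over `[a, 2 * a]`. -/
def dyadicChord (a x : ℝ) : ℝ := a ^ 2 + 3 * a * (x - a)

lemma dyadicChord_sub_dyadicChord (a x y : ℝ) :
    dyadicChord a x - dyadicChord a y = 3 * a * (x - y) := by
  unfold dyadicChord; ring

lemma dyadicChord_le_dyadicChord {a b x : ℝ} (hab : a ≤ b) (hx : 3 * x ≤ 2 * (a + b)) :
    dyadicChord b x ≤ dyadicChord a x := by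
  have key : dyadicChord a x - dyadicChord b x = (b - a) * (2 * (a + b) - 3 * x) := by
    unfold dyadicChord; ring
  nlinarith [mul_nonneg (sub_nonneg.2 hab) (sub_nonneg.2 hx)]

lemma dyadicChord_nonpos {a x : ℝ} (ha : 0 ≤ a) (hx : x ≤ 0) : dyadicChord a x ≤ 0 := by
  unfold dyadicChord; nlinarith [mul_nonpos_of_nonneg_of_nonpos ha hx]

section

variable {g : ℝ → ℝ}
  (h1 : ∀ (x : ℝ) (i : ℤ), (2 : ℝ) ^ i ≤ x → x < (2 : ℝ) ^ (i + 1) →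
    g x = (2 : ℝ) ^ (2 * i) + 3 * (2 : ℝ) ^ i * (x - (2 : ℝ) ^ i))

include h1 in
lemma eq_dyadicChord_zpow_log {x : ℝ} (hx : 0 < x) :
    g x = dyadicChord ((2 : ℝ) ^ Int.log 2 x) x := by
  rw [h1 x _ (Int.zpow_log_le_self one_lt_two hx) (Int.lt_zpow_succ_log_self one_lt_two x),
    dyadicChord, mul_comm, zpow_mul]
  norm_cast

include h1 in
lemma dyadicChord_zpow_log_le (h0 : ∀ x : ℝ, x ≤ 0 → g x = 0) {u t : ℝ} (hut : u < t) :
    dyadicChord ((2 : ℝ) ^ Int.log 2 t) u ≤ g u := by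
  rcases le_or_gt u 0 with hu | hu
  · rw [h0 u hu]
    exact dyadicChord_nonpos (by positivity) hu
  rw [eq_dyadicChord_zpow_log h1 hu]
  have hlog : Int.log 2 u ≤ Int.log 2 t := Int.log_mono_right hu hut.le
  rcases hlog.eq_or_lt with heq | hlt
  · rw [heq]
  have hstep : (2 : ℝ) ^ (Int.log 2 u + 1) ≤ (2 : ℝ) ^ Int.log 2 t :=
    zpow_le_zpow_right₀ one_le_two hlt
  have hdouble : (2 : ℝ) ^ (Int.log 2 u + 1) = 2 * (2 : ℝ) ^ Int.log 2 u := by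
    rw [zpow_add_one₀ two_ne_zero, mul_comm]
  have hu_lt := Int.lt_zpow_succ_log_self (R := ℝ) one_lt_two u
  push_cast at hu_lt
  exact dyadicChord_le_dyadicChord (by linarith [zpow_pos (two_pos (α := ℝ)) (Int.log 2 u)]) (by linarith)

end

/-- Example 3.8 (key difference-quotient estimate): for the piecewise affine function `g`,
defined by `g x = 0` for `x ≤ 0` and `g x = 2^(2*i) + 3 * 2^i * (x - 2^i)` for `x > 0`,
where `i : ℤ` is the unique integer with `2^i ≤ x < 2^(i+1)`, one has
`g t - g u ≤ 3 * t * (t - u)` whenever `u < t` and `0 < t`. -/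
theorem diff_quotient_estimate_piecewise_affine_g (g : ℝ → ℝ)
    (h0 : ∀ x : ℝ, x ≤ 0 → g x = 0)
    (h1 : ∀ (x : ℝ) (i : ℤ), (2 : ℝ) ^ i ≤ x → x < (2 : ℝ) ^ (i + 1) →
      g x = (2 : ℝ) ^ (2 * i) + 3 * (2 : ℝ) ^ i * (x - (2 : ℝ) ^ i)) :
    ∀ u t : ℝ, u < t → 0 < t → g t - g u ≤ 3 * t * (t - u) := by
  intro u t hut ht
  have hpow : (2 : ℝ) ^ Int.log 2 t ≤ t := by exact_mod_cast Int.zpow_log_le_self one_lt_two ht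
  calc g t - g u
      ≤ dyadicChord ((2 : ℝ) ^ Int.log 2 t) t - dyadicChord ((2 : ℝ) ^ Int.log 2 t) u := by
        rw [eq_dyadicChord_zpow_log h1 ht]
        linarith [dyadicChord_zpow_log_le h1 h0 hut]
    _ = 3 * (2 : ℝ) ^ Int.log 2 t * (t - u) := dyadicChord_sub_dyadicChord _ _ _
    _ ≤ 3 * t * (t - u) := by gcongr
end

section
/- Let g : ℝ → ℝ be defined by g(x) = 0 for x ≤ 0 and g(x) = 2^(2i) + 3·2^i·(x − 2^i) for x > 0, where i ∈ ℤ is the unique integer with 2^i ≤ x < 2^(i+1). Then g is strictly differentiable at 0 with derivative 0; that is, (g(t) − g(u))/(t − u) → 0 as t, u → 0 with t ≠ u (HasStrictDerivAt g 0 0). -/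
open Topology Filter

/-!
On `[2^i, 2^(i+1))` the function `g` is the affine piece `3·2^i·x − 2·4^i`; these pieces agree at
the dyadic break points and their slopes increase, so `g` is the maximum of its pieces and of `0`.
Hence `g` has at every `x` a supporting line whose slope `s x` (the slope of the piece through `x`,
or `0` for `x ≤ 0`) satisfies `0 ≤ s x ≤ 3|x|`. Supporting lines whose slopes tend to `0` force
strict differentiability at `0` with derivative `0`.
-/

theorem hasStrictDerivAt_of_subgradient {f s : ℝ → ℝ} {x₀ : ℝ}
    (hf : ∀ x y, f x + s x * (y - x) ≤ f y) (hs : ContinuousAt s x₀) :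
    HasStrictDerivAt f (s x₀) x₀ := by
  rw [hasStrictDerivAt_iff_hasStrictFDerivAt, hasStrictFDerivAt_iff_isLittleO,
    Asymptotics.isLittleO_iff]
  intro ε hε
  have hnear : ∀ᶠ x in 𝓝 x₀, |s x - s x₀| ≤ ε := by
    filter_upwards [Metric.tendsto_nhds.1 hs ε hε] with x hx using hx.le
  have hpair : ∀ᶠ p : ℝ × ℝ in 𝓝 (x₀, x₀), |s p.1 - s x₀| ≤ ε ∧ |s p.2 - s x₀| ≤ ε :=
    (continuous_fst.tendsto (x₀, x₀)).eventually hnear |>.and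
      ((continuous_snd.tendsto (x₀, x₀)).eventually hnear)
  filter_upwards [hpair] with ⟨x, y⟩ ⟨hx, hy⟩
  simp only [ContinuousLinearMap.toSpanSingleton_apply, smul_eq_mul, Real.norm_eq_abs]
  -- the two supporting lines at `x` and `y` pinch the chord slope between `s y` and `s x`
  have hlow : |s y - s x₀| * |x - y| ≤ ε * |x - y| := by gcongr
  have hup : |s x - s x₀| * |x - y| ≤ ε * |x - y| := by gcongr
  rw [← abs_mul] at hlow hup
  rw [abs_le]
  constructor
  · linarith [neg_abs_le ((s y - s x₀) * (x - y)), hf y x]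
  · linarith [le_abs_self ((s x - s x₀) * (x - y)), hf x y]

theorem two_zpow_trichotomy (i j : ℤ) :
    2 * (2 : ℝ) ^ i ≤ 2 ^ j ∨ (2 : ℝ) ^ i = 2 ^ j ∨ 2 * (2 : ℝ) ^ j ≤ 2 ^ i := by
  rcases lt_trichotomy i j with h | rfl | h
  · left
    rw [← zpow_one_add₀ two_ne_zero, add_comm]
    exact zpow_le_zpow_right₀ one_le_two h
  · exact Or.inr (Or.inl rfl)
  · right; right
    rw [← zpow_one_add₀ two_ne_zero, add_comm]
    exact zpow_le_zpow_right₀ one_le_two h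

theorem affine_piece_le {a b y : ℝ} (ha : 0 < a) (hab : 2 * a ≤ b ∨ a = b ∨ 2 * b ≤ a)
    (hby : b ≤ y) (hyb : y ≤ 2 * b) :
    3 * a * y - 2 * a ^ 2 ≤ 3 * b * y - 2 * b ^ 2 := by
  rcases hab with h | rfl | h
  · nlinarith
  · rfl
  · nlinarith

theorem zpow_log_two_le {x : ℝ} (hx : 0 < x) : (2 : ℝ) ^ Int.log 2 x ≤ x := by
  exact_mod_cast Int.zpow_log_le_self one_lt_two hx

theorem lt_zpow_log_two_add_one (x : ℝ) : x < (2 : ℝ) ^ (Int.log 2 x + 1) := by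
  exact_mod_cast Int.lt_zpow_succ_log_self one_lt_two x

noncomputable def dyadicSlope (x : ℝ) : ℝ := if x ≤ 0 then 0 else 3 * 2 ^ Int.log 2 x

theorem abs_dyadicSlope_le (x : ℝ) : |dyadicSlope x| ≤ 3 * |x| := by
  unfold dyadicSlope
  split_ifs with hx
  · simp
  · have hx : 0 < x := not_le.mp hx
    rw [abs_of_pos (by positivity), abs_of_pos hx]
    exact mul_le_mul_of_nonneg_left (zpow_log_two_le hx) zero_le_three

theorem continuousAt_dyadicSlope_zero : ContinuousAt dyadicSlope 0 := by
  have h3 : Tendsto (fun x : ℝ => 3 * ‖x‖) (𝓝 0) (𝓝 0) := by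
    simpa using (continuous_norm.tendsto (0 : ℝ)).const_mul 3
  simpa [ContinuousAt, dyadicSlope] using
    squeeze_zero_norm (fun x => by simpa using abs_dyadicSlope_le x) h3

section

variable {g : ℝ → ℝ}
  (h1 : ∀ (x : ℝ) (i : ℤ), (2 : ℝ) ^ i ≤ x → x < (2 : ℝ) ^ (i + 1) →
    g x = (2 : ℝ) ^ (2 * i) + 3 * (2 : ℝ) ^ i * (x - (2 : ℝ) ^ i))
include h1

theorem g_eq_of_pos {x : ℝ} (hx : 0 < x) :
    g x = 3 * 2 ^ Int.log 2 x * x - 2 * ((2 : ℝ) ^ Int.log 2 x) ^ 2 := by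
  rw [h1 x _ (zpow_log_two_le hx) (lt_zpow_log_two_add_one x), mul_comm 2, zpow_mul]
  norm_cast
  ring

variable (h0 : ∀ x : ℝ, x ≤ 0 → g x = 0)
include h0

theorem g_nonneg (y : ℝ) : 0 ≤ g y := by
  rcases le_or_gt y 0 with hy | hy
  · exact (h0 y hy).ge
  · have hb := zpow_log_two_le hy
    have hb0 : (0 : ℝ) < 2 ^ Int.log 2 y := by positivity
    rw [g_eq_of_pos h1 hy]
    nlinarith

theorem g_add_dyadicSlope_mul_le (x y : ℝ) : g x + dyadicSlope x * (y - x) ≤ g y := by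
  rcases le_or_gt x 0 with hx | hx
  · simpa [dyadicSlope, hx, h0 x hx] using g_nonneg h1 h0 y
  · have ha : (0 : ℝ) < 2 ^ Int.log 2 x := by positivity
    rw [dyadicSlope, if_neg hx.not_ge, g_eq_of_pos h1 hx]
    rcases le_or_gt y 0 with hy | hy
    · rw [h0 y hy]
      nlinarith
    · have hyb : y ≤ 2 * 2 ^ Int.log 2 y := by
        rw [← zpow_one_add₀ two_ne_zero, add_comm]
        exact (lt_zpow_log_two_add_one y).le
      calc _ = 3 * 2 ^ Int.log 2 x * y - 2 * ((2 : ℝ) ^ Int.log 2 x) ^ 2 := by ring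
        _ ≤ 3 * 2 ^ Int.log 2 y * y - 2 * ((2 : ℝ) ^ Int.log 2 y) ^ 2 :=
          affine_piece_le ha (two_zpow_trichotomy _ _) (zpow_log_two_le hy) hyb
        _ = g y := (g_eq_of_pos h1 hy).symm

end

/-- Example 3.8: the piecewise affine function `g`, defined by `g x = 0` for `x ≤ 0` and
`g x = 2^(2*i) + 3 * 2^i * (x - 2^i)` for `x > 0`, where `i : ℤ` is the unique integer
with `2^i ≤ x < 2^(i+1)`, is strictly differentiable at `0` with derivative `0`. -/
theorem hasStrictDerivAt_piecewise_affine_g (g : ℝ → ℝ)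
    (h0 : ∀ x : ℝ, x ≤ 0 → g x = 0)
    (h1 : ∀ (x : ℝ) (i : ℤ), (2 : ℝ) ^ i ≤ x → x < (2 : ℝ) ^ (i + 1) →
      g x = (2 : ℝ) ^ (2 * i) + 3 * (2 : ℝ) ^ i * (x - (2 : ℝ) ^ i)) :
    HasStrictDerivAt g 0 0 := by
  have hslope : dyadicSlope 0 = 0 := if_pos le_rfl
  simpa [hslope] using hasStrictDerivAt_of_subgradient (g_add_dyadicSlope_mul_le h1 h0)
    continuousAt_dyadicSlope_zero
end

section
/- Let g : ℝ → ℝ be defined by g(x) = 0 for x ≤ 0 and g(x) = 2^(2i) + 3·2^i·(x − 2^i) for x > 0, where i ∈ ℤ is the unique integer with 2^i ≤ x < 2^(i+1). Then for every integer i, g is not differentiable at the point x = 2^i. -/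
open Set Filter Topology

theorem not_differentiableAt_of_hasDerivWithinAt_Iic_Ici {F : Type*} [NormedAddCommGroup F]
    [NormedSpace ℝ F] {f : ℝ → F} {x : ℝ} {a b : F} (hl : HasDerivWithinAt f a (Iic x) x)
    (hr : HasDerivWithinAt f b (Ici x) x) (hab : a ≠ b) : ¬ DifferentiableAt ℝ f x := by
  intro hf
  have hla : a = deriv f x :=
    (uniqueDiffWithinAt_Iic x).eq_deriv _ hl hf.hasDerivAt.hasDerivWithinAt
  have hrb : b = deriv f x :=
    (uniqueDiffWithinAt_Ici x).eq_deriv _ hr hf.hasDerivAt.hasDerivWithinAt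
  exact hab (hla.trans hrb.symm)

theorem hasDerivWithinAt_of_eqOn_affine {f : ℝ → ℝ} {s t : Set ℝ} {x m : ℝ} (ht : t ∈ 𝓝[s] x)
    (h : ∀ y ∈ t, f y = f x + m * (y - x)) : HasDerivWithinAt f m s x := by
  have hline : HasDerivWithinAt (fun y => f x + m * (y - x)) m s x := by
    simpa using (((hasDerivAt_id x).sub_const x).const_mul m).const_add (f x) |>.hasDerivWithinAt
  exact hline.congr_of_eventuallyEq (mem_of_superset ht h) (by simp)

theorem piecewise_affine_g_eq_on_Ico {g : ℝ → ℝ}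
    (hg : ∀ (x : ℝ) (i : ℤ), (2 : ℝ) ^ i ≤ x → x < (2 : ℝ) ^ (i + 1) →
      g x = (2 : ℝ) ^ (2 * i) + 3 * (2 : ℝ) ^ i * (x - (2 : ℝ) ^ i)) (i : ℤ) :
    ∀ y ∈ Ico ((2 : ℝ) ^ i) (2 ^ (i + 1)), g y = g (2 ^ i) + 3 * 2 ^ i * (y - 2 ^ i) := by
  have hi : (2 : ℝ) ^ i < 2 ^ (i + 1) := zpow_lt_zpow_right₀ one_lt_two (by omega)
  intro y hy
  rw [hg y i hy.1 hy.2, hg _ i le_rfl hi]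
  ring

/-- Since `2 ^ (2 * (i - 1)) + 3 * 2 ^ (i - 1) * 2 ^ (i - 1) = 2 ^ (2 * i)`, the piece on
`[2 ^ (i - 1), 2 ^ i)` meets the next one at `2 ^ i`. -/
theorem piecewise_affine_g_eq_on_Ioc {g : ℝ → ℝ}
    (hg : ∀ (x : ℝ) (i : ℤ), (2 : ℝ) ^ i ≤ x → x < (2 : ℝ) ^ (i + 1) →
      g x = (2 : ℝ) ^ (2 * i) + 3 * (2 : ℝ) ^ i * (x - (2 : ℝ) ^ i)) (i : ℤ) :
    ∀ y ∈ Ioc ((2 : ℝ) ^ (i - 1)) (2 ^ i), g y = g (2 ^ i) + 3 * 2 ^ (i - 1) * (y - 2 ^ i) := by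
  intro y ⟨hy_gt, hy_le⟩
  rcases hy_le.lt_or_eq with hy_lt | rfl
  · have hi : (2 : ℝ) ^ i < 2 ^ (i + 1) := zpow_lt_zpow_right₀ one_lt_two (by omega)
    have hsq (j : ℤ) : (2 : ℝ) ^ (2 * j) = (2 ^ j) ^ 2 := by rw [mul_comm, zpow_mul]; norm_cast
    have hdouble : (2 : ℝ) ^ i = 2 * 2 ^ (i - 1) := by
      rw [← zpow_one_add₀ two_ne_zero]; ring_nf
    rw [hg y (i - 1) hy_gt.le (by simpa using hy_lt), hg _ i le_rfl hi, hsq, hsq, hdouble]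
    ring
  · ring

theorem not_differentiableAt_piecewise_affine_g_general (g : ℝ → ℝ)
    (h1 : ∀ (x : ℝ) (i : ℤ), (2 : ℝ) ^ i ≤ x → x < (2 : ℝ) ^ (i + 1) →
      g x = (2 : ℝ) ^ (2 * i) + 3 * (2 : ℝ) ^ i * (x - (2 : ℝ) ^ i)) :
    ∀ i : ℤ, ¬ DifferentiableAt ℝ g ((2 : ℝ) ^ i) := by
  intro i
  have hl : HasDerivWithinAt g (3 * 2 ^ (i - 1)) (Iic (2 ^ i)) (2 ^ i) :=
    hasDerivWithinAt_of_eqOn_affine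
      (Ioc_mem_nhdsLE (zpow_lt_zpow_right₀ one_lt_two (by omega))) (piecewise_affine_g_eq_on_Ioc h1 i)
  have hr : HasDerivWithinAt g (3 * 2 ^ i) (Ici (2 ^ i)) (2 ^ i) :=
    hasDerivWithinAt_of_eqOn_affine
      (Ico_mem_nhdsGE (zpow_lt_zpow_right₀ one_lt_two (by omega))) (piecewise_affine_g_eq_on_Ico h1 i)
  have hslopes : (3 : ℝ) * 2 ^ (i - 1) < 3 * 2 ^ i := by
    gcongr
    · norm_num
    · omega
  exact not_differentiableAt_of_hasDerivWithinAt_Iic_Ici hl hr hslopes.ne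

/-- Example 3.8: the piecewise affine function `g`, defined by `g x = 0` for `x ≤ 0` and
`g x = 2^(2*i) + 3 * 2^i * (x - 2^i)` for `x > 0`, where `i : ℤ` is the unique integer
with `2^i ≤ x < 2^(i+1)`, fails to be differentiable at each point `x = 2^i`, `i : ℤ`. -/
theorem not_differentiableAt_piecewise_affine_g (g : ℝ → ℝ)
    (h0 : ∀ x : ℝ, x ≤ 0 → g x = 0)
    (h1 : ∀ (x : ℝ) (i : ℤ), (2 : ℝ) ^ i ≤ x → x < (2 : ℝ) ^ (i + 1) →
      g x = (2 : ℝ) ^ (2 * i) + 3 * (2 : ℝ) ^ i * (x - (2 : ℝ) ^ i)) :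
    ∀ i : ℤ, ¬ DifferentiableAt ℝ g ((2 : ℝ) ^ i) :=
  not_differentiableAt_piecewise_affine_g_general g h1
end

section
/- Let g : ℝ → ℝ be defined by g(x) = 0 for x ≤ 0 and g(x) = 2^(2i) + 3·2^i·(x − 2^i) for x > 0, where i ∈ ℤ is the unique integer with 2^i ≤ x < 2^(i+1), and let f : ℝ → ℝ be defined by f(x) = ∫_0^x g(t) dt. Then for every x ∈ ℝ, f has derivative g(x) at x (HasDerivAt f (g x) x). -/
open Set Filter

private lemma two_cast_eq : ((2 : ℕ) : ℝ) = (2 : ℝ) := by norm_num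

private lemma zpow_two_mul (i : ℤ) : (2 : ℝ) ^ (2 * i) = (2:ℝ) ^ i * (2:ℝ) ^ i := by
  rw [two_mul, zpow_add₀ (by norm_num : (2:ℝ) ≠ 0)]

private lemma log_eq_of_bounds {x : ℝ} {n : ℤ} (h1 : (2 : ℝ) ^ n ≤ x)
    (h2 : x < (2 : ℝ) ^ (n + 1)) : Int.log 2 x = n := by
  have hx : 0 < x := lt_of_lt_of_le (zpow_pos (by norm_num) n) h1
  have hb : (1 : ℕ) < 2 := by norm_num
  have hle : n ≤ Int.log 2 x := by
    rw [← Int.zpow_le_iff_le_log hb hx]; rw [two_cast_eq]; exact h1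
  have hlt : Int.log 2 x < n + 1 := by
    rw [← Int.lt_zpow_iff_log_lt hb hx]; rw [two_cast_eq]; exact h2
  omega

private lemma continuous_G :
    Continuous (fun x : ℝ => if 0 < x then
      (2 : ℝ) ^ (2 * Int.log 2 x) + 3 * (2 : ℝ) ^ (Int.log 2 x) *
        (x - (2 : ℝ) ^ (Int.log 2 x)) else 0) := by
  set G : ℝ → ℝ := fun x => if 0 < x then
      (2 : ℝ) ^ (2 * Int.log 2 x) + 3 * (2 : ℝ) ^ (Int.log 2 x) *
        (x - (2 : ℝ) ^ (Int.log 2 x)) else 0 with hG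
  have hGval : ∀ x : ℝ, 0 < x → G x = (2 : ℝ) ^ (2 * Int.log 2 x)
      + 3 * (2 : ℝ) ^ (Int.log 2 x) * (x - (2 : ℝ) ^ (Int.log 2 x)) := by
    intro x hx; simp [hG, hx]
  have hGzero : ∀ x : ℝ, x ≤ 0 → G x = 0 := by
    intro x hx; simp [hG, not_lt.mpr hx]
  -- bounds for the squeeze at 0
  have hbound : ∀ x : ℝ, 0 ≤ G x ∧ G x ≤ 4 * x ^ 2 := by
    intro x
    rcases le_or_gt x 0 with hx | hx
    · exact ⟨by rw [hGzero x hx], by rw [hGzero x hx]; positivity⟩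
    · set i := Int.log 2 x with hi
      have h1 : (2 : ℝ) ^ i ≤ x := by
        have := Int.zpow_log_le_self (by norm_num : (1:ℕ) < 2) hx
        rwa [two_cast_eq] at this
      have h2 : x < (2 : ℝ) ^ (i + 1) := by
        have := Int.lt_zpow_succ_log_self (by norm_num : (1:ℕ) < 2) x
        rwa [two_cast_eq] at this
      have hpow : (0:ℝ) < (2 : ℝ) ^ i := zpow_pos (by norm_num) i
      rw [hGval x hx, ← hi]
      have hsq := zpow_two_mul i
      have hdiff : x - (2:ℝ) ^ i < (2:ℝ) ^ i := by
        have : (2:ℝ) ^ (i+1) = 2 * (2:ℝ) ^ i := by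
          rw [zpow_add₀ (by norm_num : (2:ℝ) ≠ 0)]; ring
        rw [this] at h2; linarith
      constructor
      · have : 0 ≤ x - (2:ℝ) ^ i := by linarith
        positivity
      · nlinarith
  rw [continuous_iff_continuousAt]
  intro a
  rcases lt_trichotomy a 0 with ha | ha | ha
  · -- a < 0 : locally constant 0
    have : G =ᶠ[nhds a] (fun _ => (0:ℝ)) := by
      filter_upwards [Iio_mem_nhds ha] with x hx
      simp only [mem_Iio] at hx
      exact hGzero x hx.le
    exact (continuousAt_const).congr this.symm
  · -- a = 0 : squeeze
    subst ha
    have hG0 : G 0 = 0 := hGzero 0 le_rfl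
    rw [ContinuousAt, hG0]
    have hT : Tendsto (fun x : ℝ => 4 * x ^ 2) (nhds 0) (nhds 0) := by
      have hc : Continuous (fun x : ℝ => 4 * x ^ 2) := by continuity
      simpa using hc.tendsto 0
    exact squeeze_zero (fun x => (hbound x).1) (fun x => (hbound x).2) hT
  · -- a > 0
    set i := Int.log 2 a with hi
    have h1 : (2 : ℝ) ^ i ≤ a := by
      have := Int.zpow_log_le_self (by norm_num : (1:ℕ) < 2) ha
      rwa [two_cast_eq] at this
    have h2 : a < (2 : ℝ) ^ (i + 1) := by
      have := Int.lt_zpow_succ_log_self (by norm_num : (1:ℕ) < 2) a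
      rwa [two_cast_eq] at this
    have hGa : G a = (2 : ℝ) ^ (2 * i) + 3 * (2 : ℝ) ^ i * (a - (2 : ℝ) ^ i) := by
      rw [hGval a ha, ← hi]
    rcases eq_or_lt_of_le h1 with heq | hlt
    · -- a = 2 ^ i : left and right limits
      rw [continuousAt_iff_continuous_left_right]
      have e1 : (2:ℝ) ^ (i-1) = (2:ℝ) ^ i / 2 := by
        rw [zpow_sub₀ (by norm_num : (2:ℝ) ≠ 0), zpow_one]
      have e2 : (2:ℝ) ^ (2*(i-1)) = (2:ℝ) ^ (2*i) / 4 := by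
        rw [show 2*(i-1) = 2*i - 2 by ring, zpow_sub₀ (by norm_num : (2:ℝ) ≠ 0)]
        norm_num
      have hprev : (2:ℝ) ^ (i - 1) < a := by
        rw [← heq]
        exact zpow_lt_zpow_right₀ (by norm_num) (by omega)
      constructor
      · -- left
        have hc : ContinuousWithinAt (fun x : ℝ => (2 : ℝ) ^ (2 * (i-1))
            + 3 * (2 : ℝ) ^ (i-1) * (x - (2 : ℝ) ^ (i-1))) (Iic a) a :=
          Continuous.continuousWithinAt (by continuity)
        apply hc.congr_of_eventuallyEq
        · filter_upwards [Filter.inter_mem self_mem_nhdsWithin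
            (mem_nhdsWithin_of_mem_nhds (Ioi_mem_nhds hprev))] with x hx
          obtain ⟨hx1, hx2⟩ := hx
          simp only [mem_Iic] at hx1
          simp only [mem_Ioi] at hx2
          rcases eq_or_lt_of_le hx1 with hxa | hxa
          · subst hxa
            rw [hGa, ← heq, e1, e2]
            have hsq := zpow_two_mul i
            field_simp
            nlinarith [zpow_two_mul i]
          · have hxpos : 0 < x := lt_trans (zpow_pos (by norm_num) (i-1)) hx2
            rw [hGval x hxpos, log_eq_of_bounds hx2.le
              (by rw [show i - 1 + 1 = i by ring, heq]; exact hxa)]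
        · -- value at a
          rw [hGa, ← heq, e1, e2]
          field_simp
          nlinarith [zpow_two_mul i]
      · -- right
        have hc : ContinuousWithinAt (fun x : ℝ => (2 : ℝ) ^ (2 * i)
            + 3 * (2 : ℝ) ^ i * (x - (2 : ℝ) ^ i)) (Ici a) a :=
          Continuous.continuousWithinAt (by continuity)
        apply hc.congr_of_eventuallyEq
        · filter_upwards [Filter.inter_mem self_mem_nhdsWithin
            (mem_nhdsWithin_of_mem_nhds (Iio_mem_nhds h2))] with x hx
          obtain ⟨hx1, hx2⟩ := hx
          simp only [mem_Ici] at hx1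
          simp only [mem_Iio] at hx2
          have hxpos : 0 < x := lt_of_lt_of_le ha hx1
          rw [hGval x hxpos, log_eq_of_bounds (h1.trans hx1) hx2]
        · exact hGa
    · -- 2^i < a : locally affine
      have hmem : Ioo ((2:ℝ)^i) ((2:ℝ)^(i+1)) ∈ nhds a := Ioo_mem_nhds hlt h2
      have : G =ᶠ[nhds a] (fun x : ℝ => (2 : ℝ) ^ (2 * i)
          + 3 * (2 : ℝ) ^ i * (x - (2 : ℝ) ^ i)) := by
        filter_upwards [hmem] with x hx
        have hxpos : 0 < x := lt_trans (zpow_pos (by norm_num) i) hx.1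
        rw [hGval x hxpos, log_eq_of_bounds hx.1.le hx.2]
      exact ((Continuous.continuousAt (by continuity)).congr this.symm)

/-- Example 3.8: with `g` the piecewise affine function defined by `g x = 0` for `x ≤ 0`
and `g x = 2^(2*i) + 3 * 2^i * (x - 2^i)` for `x > 0`, where `i : ℤ` is the unique integer
with `2^i ≤ x < 2^(i+1)`, the function `f x = ∫ t in 0..x, g t` has derivative `g x` at
every `x : ℝ`. -/
theorem hasDerivAt_integral_piecewise_affine_g (g : ℝ → ℝ)
    (h0 : ∀ x : ℝ, x ≤ 0 → g x = 0)
    (h1 : ∀ (x : ℝ) (i : ℤ), (2 : ℝ) ^ i ≤ x → x < (2 : ℝ) ^ (i + 1) →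
      g x = (2 : ℝ) ^ (2 * i) + 3 * (2 : ℝ) ^ i * (x - (2 : ℝ) ^ i)) :
    ∀ x : ℝ, HasDerivAt (fun y : ℝ => ∫ t in (0 : ℝ)..y, g t) (g x) x := by
  have hgG : g = fun x : ℝ => if 0 < x then
      (2 : ℝ) ^ (2 * Int.log 2 x) + 3 * (2 : ℝ) ^ (Int.log 2 x) *
        (x - (2 : ℝ) ^ (Int.log 2 x)) else 0 := by
    funext x
    rcases lt_or_ge 0 x with hx | hx
    · have hl : (2 : ℝ) ^ (Int.log 2 x) ≤ x := by
        have := Int.zpow_log_le_self (by norm_num : (1:ℕ) < 2) hx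
        rwa [two_cast_eq] at this
      have hr : x < (2 : ℝ) ^ (Int.log 2 x + 1) := by
        have := Int.lt_zpow_succ_log_self (by norm_num : (1:ℕ) < 2) x
        rwa [two_cast_eq] at this
      rw [h1 x _ hl hr, if_pos hx]
    · rw [h0 x hx, if_neg (not_lt.mpr hx)]
  have hcont : Continuous g := hgG ▸ continuous_G
  intro x
  exact (hcont.integral_hasStrictDerivAt 0 x).hasDerivAt
end

section
/- Let g : ℝ → ℝ be defined by g(x) = 0 for x ≤ 0 and g(x) = 2^(2i) + 3·2^i·(x − 2^i) for x > 0, where i ∈ ℤ is the unique integer with 2^i ≤ x < 2^(i+1), and let f : ℝ → ℝ be defined by f(x) = ∫_0^x g(t) dt. Then f is convex on ℝ (ConvexOn ℝ Set.univ f). -/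
/-- Example 3.8: with `g` the piecewise affine function defined by `g x = 0` for `x ≤ 0`
and `g x = 2^(2*i) + 3 * 2^i * (x - 2^i)` for `x > 0`, where `i : ℤ` is the unique integer
with `2^i ≤ x < 2^(i+1)`, the function `f x = ∫ t in 0..x, g t` is convex on `ℝ`. -/
theorem convexOn_integral_piecewise_affine_g (g : ℝ → ℝ)
    (h0 : ∀ x : ℝ, x ≤ 0 → g x = 0)
    (h1 : ∀ (x : ℝ) (i : ℤ), (2 : ℝ) ^ i ≤ x → x < (2 : ℝ) ^ (i + 1) →
      g x = (2 : ℝ) ^ (2 * i) + 3 * (2 : ℝ) ^ i * (x - (2 : ℝ) ^ i)) :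
    ConvexOn ℝ Set.univ (fun y : ℝ => ∫ t in (0 : ℝ)..y, g t) := by
  have h2 : ((2 : ℕ) : ℝ) = (2 : ℝ) := by norm_num
  have key : ∀ x : ℝ, 0 < x → g x = (2 : ℝ) ^ (2 * Int.log 2 x)
      + 3 * (2 : ℝ) ^ (Int.log 2 x) * (x - (2 : ℝ) ^ (Int.log 2 x)) := by
    intro x hx
    have hl := Int.zpow_log_le_self (R := ℝ) (b := 2) one_lt_two hx
    have hr := Int.lt_zpow_succ_log_self (R := ℝ) (b := 2) one_lt_two x
    rw [h2] at hl hr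
    exact h1 x _ hl hr
  -- monotonicity of g
  have hg_mono : Monotone g := by
    intro x y hxy
    rcases le_or_gt y 0 with hy | hy
    · rw [h0 x (hxy.trans hy), h0 y hy]
    have hgy_pos : (2 : ℝ) ^ (2 * Int.log 2 y) ≤ g y := by
      rw [key y hy]
      have hl := Int.zpow_log_le_self (R := ℝ) (b := 2) one_lt_two hy
      rw [h2] at hl
      have : (0:ℝ) < (2 : ℝ) ^ (Int.log 2 y) := by positivity
      nlinarith
    rcases le_or_gt x 0 with hx | hx
    · rw [h0 x hx]
      have : (0:ℝ) < (2 : ℝ) ^ (2 * Int.log 2 y) := by positivity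
      linarith
    · set i := Int.log 2 x with hi
      set j := Int.log 2 y with hj
      have hij : i ≤ j := Int.log_mono_right hx hxy
      rw [key x hx, key y hy, ← hi, ← hj]
      rcases eq_or_lt_of_le hij with h | h
      · rw [← h]
        have : (0:ℝ) < (2 : ℝ) ^ i := by positivity
        nlinarith
      · -- g x < 2^(2*(i+1)) ≤ 2^(2*j) ≤ g y
        have hxlt : x < (2 : ℝ) ^ (i + 1) := by
          have := Int.lt_zpow_succ_log_self (R := ℝ) (b := 2) one_lt_two x
          rw [h2] at this; exact this
        have h1' : (2:ℝ) ^ (i+1) = 2 * (2:ℝ) ^ i := by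
          rw [zpow_add_one₀ (by norm_num : (2:ℝ) ≠ 0)]; ring
        have h2i : (2:ℝ) ^ (2*i) = (2:ℝ)^i * (2:ℝ)^i := by
          rw [two_mul, zpow_add₀ (by norm_num : (2:ℝ) ≠ 0)]
        have h2j : (2:ℝ) ^ (2*j) = (2:ℝ)^j * (2:ℝ)^j := by
          rw [two_mul, zpow_add₀ (by norm_num : (2:ℝ) ≠ 0)]
        have hle : (2:ℝ) ^ (2*(i+1)) ≤ (2:ℝ) ^ (2*j) :=
          zpow_le_zpow_right₀ one_le_two (by omega)
        have h2i1 : (2:ℝ) ^ (2*(i+1)) = 4 * ((2:ℝ)^i * (2:ℝ)^i) := by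
          rw [show 2*(i+1) = 2*i + 2 by ring, zpow_add₀ (by norm_num : (2:ℝ) ≠ 0), h2i]
          norm_num; ring
        have hyl : (2:ℝ) ^ j ≤ y := by
          have := Int.zpow_log_le_self (R := ℝ) (b := 2) one_lt_two hy
          rw [h2] at this; exact this
        have hpi : (0:ℝ) < (2:ℝ)^i := by positivity
        have hpj : (0:ℝ) < (2:ℝ)^j := by positivity
        nlinarith [hxlt, hyl]
  -- integrability
  have hint : ∀ a b : ℝ, IntervalIntegrable g MeasureTheory.volume a b :=
    fun a b => hg_mono.intervalIntegrable
  apply convexOn_of_slope_mono_adjacent convex_univ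
  intro x y z _ _ hxy hyz
  have hfyx : (∫ t in (0:ℝ)..y, g t) - ∫ t in (0:ℝ)..x, g t = ∫ t in x..y, g t :=
    intervalIntegral.integral_interval_sub_left (hint 0 y) (hint 0 x)
  have hfzy : (∫ t in (0:ℝ)..z, g t) - ∫ t in (0:ℝ)..y, g t = ∫ t in y..z, g t :=
    intervalIntegral.integral_interval_sub_left (hint 0 z) (hint 0 y)
  rw [hfyx, hfzy]
  have hA : (∫ t in x..y, g t) ≤ (y - x) * g y := by
    have := intervalIntegral.integral_mono_on hxy.le (hint x y)
      (intervalIntegrable_const (c := g y)) (fun t ht => hg_mono ht.2)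
    simpa [intervalIntegral.integral_const, smul_eq_mul] using this
  have hB : (z - y) * g y ≤ ∫ t in y..z, g t := by
    have := intervalIntegral.integral_mono_on hyz.le
      (intervalIntegrable_const (c := g y)) (hint y z) (fun t ht => hg_mono ht.1)
    simpa [intervalIntegral.integral_const, smul_eq_mul] using this
  rw [div_le_div_iff₀ (by linarith) (by linarith)]
  nlinarith [hA, hB, hg_mono (le_refl y)]
end
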